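/- arXiv:2404.16675 — 5 statements merged into one kernel-verified Lean document; each statement's English description precedes it below -/
import Mathlib

section
/- Let A, B be bounded operators on Hilbert spaces H, H' respectively, and suppose X : dom X ⊆ H → H' is a closed, densely defined, injective linear map with dense range such that A maps dom X into dom X and X ∘ A ⊆ B ∘ X. Then X⁻¹ (defined on ran X) is also closed, densely defined, injective with dense range, and X⁻¹ ∘ B ⊆ A ∘ X⁻¹ holds on dom X⁻¹ ∩ B⁻¹(ran X). -/
/-- If `X` is a pseudo-affinity (closed, densely defined, injective, dense range) with
`A (dom X) ⊆ dom X` and `X A ⊆ B X`, then the inverse `Y = X⁻¹` (defined on `ran X`) is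
again a pseudo-affinity and intertwines in the reverse direction: `Y B ⊆ A Y` on
`dom Y ∩ B⁻¹(ran X)`. -/
theorem stmt10 {H H' : Type*}
    [NormedAddCommGroup H] [InnerProductSpace ℂ H] [CompleteSpace H]
    [NormedAddCommGroup H'] [InnerProductSpace ℂ H'] [CompleteSpace H']
    (A : H →L[ℂ] H) (B : H' →L[ℂ] H')
    (dom : Submodule ℂ H) (X : dom →ₗ[ℂ] H')
    (hdense : Dense (dom : Set H))
    (hclosed : IsClosed {p : H × H' | ∃ x : dom, p = ((x : H), X x)})
    (hinj : Function.Injective X)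
    (hran : Dense (Set.range fun x : dom => X x))
    (hmap : ∀ x : H, x ∈ dom → A x ∈ dom)
    (hint : ∀ x : dom, X ⟨A x, hmap x x.2⟩ = B (X x)) :
    ∃ (dom' : Submodule ℂ H') (Y : dom' →ₗ[ℂ] H),
      (dom' : Set H') = Set.range (fun x : dom => X x) ∧
      Dense (dom' : Set H') ∧
      IsClosed {p : H' × H | ∃ y : dom', p = ((y : H'), Y y)} ∧
      Function.Injective Y ∧
      Dense (Set.range fun y : dom' => Y y) ∧
      (∀ (x : dom) (h : X x ∈ dom'), Y ⟨X x, h⟩ = x) ∧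
      (∀ (y : H') (hy : y ∈ dom') (hBy : B y ∈ dom'),
        Y ⟨B y, hBy⟩ = A (Y ⟨y, hy⟩)) := by

  classical
  set dom' : Submodule ℂ H' := LinearMap.range X with hdom'
  have hcoe : (dom' : Set H') = Set.range (fun x : dom => X x) := by
    ext y; simp [hdom', LinearMap.mem_range]
  set e : dom ≃ₗ[ℂ] dom' := LinearEquiv.ofInjective X hinj with he
  set Y : dom' →ₗ[ℂ] H := dom.subtype ∘ₗ (e.symm : dom' →ₗ[ℂ] dom) with hY
  have hYX : ∀ (x : dom) (h : X x ∈ dom'), Y ⟨X x, h⟩ = x := by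
    intro x h
    have : (⟨X x, h⟩ : dom') = e x := by
      apply Subtype.ext
      rfl
    simp [hY, this]
  refine ⟨dom', Y, hcoe, ?_, ?_, ?_, ?_, hYX, ?_⟩
  · rw [hcoe]; exact hran
  · have : {p : H' × H | ∃ y : dom', p = ((y : H'), Y y)}
        = Prod.swap '' {p : H × H' | ∃ x : dom, p = ((x : H), X x)} := by
      ext p
      constructor
      · rintro ⟨y, rfl⟩
        refine ⟨(Y y, (y : H')), ⟨e.symm y, ?_⟩, rfl⟩
        simp [hY, he, Prod.ext_iff]
        exact (congrArg Subtype.val (e.apply_symm_apply y)).symm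
      · rintro ⟨q, ⟨x, rfl⟩, rfl⟩
        exact ⟨e x, by simp [hY, Prod.ext_iff, he]; rfl⟩
    rw [this]
    exact (Homeomorph.prodComm H H').isClosedMap _ hclosed
  · intro a b hab
    have : (e.symm a : H) = (e.symm b : H) := hab
    exact e.symm.injective (Subtype.ext this)
  · have : Set.range (fun y : dom' => Y y) = (dom : Set H) := by
      ext z
      constructor
      · rintro ⟨y, rfl⟩; exact (e.symm y).2
      · intro hz
        exact ⟨e ⟨z, hz⟩, by simp [hY]⟩
    rw [this]; exact hdense
  · intro y hy hBy
    have hex : ∃ x : dom, X x = y := hy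
    obtain ⟨x, hx⟩ := hex
    have h1 : Y ⟨y, hy⟩ = x := by
      subst hx; exact hYX x hy
    have h2 : B y = X ⟨A x, hmap x x.2⟩ := by rw [← hx, ← hint]
    have h3 : Y ⟨B y, hBy⟩ = (⟨A x, hmap x x.2⟩ : dom) := by
      have := hYX ⟨A x, hmap x x.2⟩ (h2 ▸ hBy)
      convert this using 2
      exact Subtype.ext h2
    rw [h3, h1]
end

section
/- Let (A,b,c) and (A',b',c') be realizations on Hilbert spaces H, H' of the same formal power series, i.e., ⟪b, p(A) c⟫ = ⟪b', p(A') c'⟫ for every polynomial p, and suppose (A',b',c') is observable, i.e., the closed linear span of {A'*ⁿ b' : n ≥ 0} is H'. Then the assignment S₀(p(A)c) := p(A')c' is well-defined on the (not necessarily closed) linear span of {Aⁿ c : n ≥ 0}: if p(A)c = q(A)c then p(A')c' = q(A')c'. -/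
open Polynomial ContinuousLinearMap

/-! The defect `d = p(A')c' - q(A')c'` is orthogonal to every `A'*ⁿ b'`, since
`⟪A'*ⁿ b', d⟫ = ⟪b', (Xⁿ (p - q))(A') c'⟫ = ⟪b, Aⁿ (p(A)c - q(A)c)⟫ = 0` by the equality of the
moments; observability then forces `d = 0`. -/

theorem Polynomial.aeval_X_pow_mul_apply {R M : Type*} [CommRing R] [AddCommGroup M]
    [Module R M] [TopologicalSpace M] [IsTopologicalAddGroup M] [ContinuousConstSMul R M]
    (A : M →L[R] M) (n : ℕ) (r : R[X]) (x : M) :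
    aeval A (X ^ n * r) x = (A ^ n) (aeval A r x) := by
  rw [map_mul, map_pow, aeval_X, mul_apply_eq_comp]

theorem Submodule.eq_zero_of_forall_inner_eq_zero_of_topologicalClosure_span_eq_top
    {𝕜 E ι : Type*} [RCLike 𝕜] [NormedAddCommGroup E] [InnerProductSpace 𝕜 E] {v : ι → E}
    (hv : (span 𝕜 (Set.range v)).topologicalClosure = ⊤) {x : E}
    (h : ∀ i, inner 𝕜 (v i) x = 0) : x = 0 := by
  have hle : span 𝕜 (Set.range v) ≤ (𝕜 ∙ x)ᗮ := span_le.2 <| by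
    rintro _ ⟨i, rfl⟩
    exact (mem_orthogonal_singleton_iff_inner_left).2 (h i)
  have htop := topologicalClosure_minimal _ hle (isClosed_orthogonal _)
  rwa [hv, top_le_iff, orthogonal_eq_top_iff, span_singleton_eq_bot] at htop

theorem ContinuousLinearMap.inner_adjoint_pow_apply {𝕜 E : Type*} [RCLike 𝕜]
    [NormedAddCommGroup E] [InnerProductSpace 𝕜 E] [CompleteSpace E]
    (A : E →L[𝕜] E) (n : ℕ) (y x : E) :
    inner 𝕜 ((adjoint A ^ n) y) x = inner 𝕜 y ((A ^ n) x) := by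
  rw [← star_eq_adjoint, ← star_pow, star_eq_adjoint, adjoint_inner_left]

theorem aeval_apply_eq_zero_of_moments_eq_of_observable {𝕜 H H' : Type*} [RCLike 𝕜]
    [NormedAddCommGroup H] [InnerProductSpace 𝕜 H]
    [NormedAddCommGroup H'] [InnerProductSpace 𝕜 H'] [CompleteSpace H']
    {A : H →L[𝕜] H} {b c : H} {A' : H' →L[𝕜] H'} {b' c' : H'}
    (hsame : ∀ p : 𝕜[X], inner 𝕜 b (aeval A p c) = inner 𝕜 b' (aeval A' p c'))
    (hobs : (Submodule.span 𝕜 (Set.range fun n : ℕ => (adjoint A' ^ n) b')).topologicalClosure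
      = ⊤)
    {r : 𝕜[X]} (hr : aeval A r c = 0) : aeval A' r c' = 0 := by
  refine Submodule.eq_zero_of_forall_inner_eq_zero_of_topologicalClosure_span_eq_top hobs
    fun n => ?_
  calc inner 𝕜 ((adjoint A' ^ n) b') (aeval A' r c')
      = inner 𝕜 b' (aeval A' (X ^ n * r) c') := by
        rw [inner_adjoint_pow_apply, aeval_X_pow_mul_apply]
    _ = inner 𝕜 b ((A ^ n) (aeval A r c)) := by rw [← hsame, aeval_X_pow_mul_apply]
    _ = 0 := by rw [hr, map_zero, inner_zero_right]

theorem stmt11_general {H H' : Type*}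
    [NormedAddCommGroup H] [InnerProductSpace ℂ H]
    [NormedAddCommGroup H'] [InnerProductSpace ℂ H'] [CompleteSpace H']
    (A : H →L[ℂ] H) (b c : H) (A' : H' →L[ℂ] H') (b' c' : H')
    (hsame : ∀ p : Polynomial ℂ,
      @inner ℂ H _ b ((Polynomial.aeval A p) c) =
        @inner ℂ H' _ b' ((Polynomial.aeval A' p) c'))
    (hobs : (Submodule.span ℂ
        (Set.range fun n : ℕ => ((ContinuousLinearMap.adjoint A') ^ n) b')).topologicalClosure
          = ⊤) :
    ∀ p q : Polynomial ℂ,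
      (Polynomial.aeval A p) c = (Polynomial.aeval A q) c →
        (Polynomial.aeval A' p) c' = (Polynomial.aeval A' q) c' := by
  intro p q hpq
  have hker : aeval A (p - q) c = 0 := by rw [map_sub, sub_apply, hpq, sub_self]
  have hker' := aeval_apply_eq_zero_of_moments_eq_of_observable hsame hobs hker
  rwa [map_sub, sub_apply, sub_eq_zero] at hker'

/-- Well-definedness of the pseudo-similarity `S₀ (p(A) c) := p(A') c'`: if two
realizations generate the same power series and `(A',b',c')` is observable, then
`p(A) c = q(A) c` implies `p(A') c' = q(A') c'`. -/
theorem stmt11 {H H' : Type*}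
    [NormedAddCommGroup H] [InnerProductSpace ℂ H] [CompleteSpace H]
    [NormedAddCommGroup H'] [InnerProductSpace ℂ H'] [CompleteSpace H']
    (A : H →L[ℂ] H) (b c : H) (A' : H' →L[ℂ] H') (b' c' : H')
    (hsame : ∀ p : Polynomial ℂ,
      @inner ℂ H _ b ((Polynomial.aeval A p) c) =
        @inner ℂ H' _ b' ((Polynomial.aeval A' p) c'))
    (hobs : (Submodule.span ℂ
        (Set.range fun n : ℕ => ((ContinuousLinearMap.adjoint A') ^ n) b')).topologicalClosure
          = ⊤) :
    ∀ p q : Polynomial ℂ,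
      (Polynomial.aeval A p) c = (Polynomial.aeval A q) c →
        (Polynomial.aeval A' p) c' = (Polynomial.aeval A' q) c' :=
  stmt11_general A b c A' b' c' hsame hobs
end

section
/- Let A ∈ B(H), b, c ∈ H and set C := closure of span{Aⁿ c : n ≥ 0} (the controllable subspace) and O := closure of span{A*ⁿ b : n ≥ 0} (the observable subspace). Let M := C ⊖ (O^⊥ ∩ C) with orthogonal projection Q, and set A₀ := Q A|_M, b₀ := Q b, c₀ := Q c. Then ⟪b₀, A₀ⁿ c₀⟫ = ⟪b, Aⁿ c⟫ for all n ≥ 0, the closed span of {A₀ⁿ c₀} is M, and the closed span of {A₀*ⁿ b₀} is M. -/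
/-!
The subspaces `C` and `N = O^⊥ ∩ C` are `A`-invariant, so `M = C ⊖ N` is semi-invariant: for
`y ∈ C` the defect `y - Qy` lies in `N`, which `A` preserves and `Q` annihilates. Hence
`Q Aⁿ = (QAQ)ⁿ Q` on `C`; since also `M = N^⊥ ⊖ C^⊥` with `N^⊥ ⊇ C^⊥` both `A*`-invariant, likewise
`Q A*ⁿ = (QA*Q)ⁿ Q` on `N^⊥ ∋ b`. The moments agree because `Aⁿc - QAⁿc ∈ N ⊥ b`. Finally `Q` maps
the spans of `{Aⁿc}` and `{A*ⁿb}` onto dense subspaces of `M`: a vector of `M` orthogonal to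
their images lies in `C^⊥`, resp. in `O^⊥ ∩ C = N`, and both meet `M` trivially.
-/

open Module.End

namespace ContinuousLinearMap

section Semiring

variable {R M : Type*} [Semiring R] [TopologicalSpace M] [AddCommMonoid M] [Module R M]

theorem span_range_pow_apply_mem_invtSubmodule (T : M →L[R] M) (v : M) :
    Submodule.span R (Set.range fun n : ℕ => (T ^ n) v) ∈ invtSubmodule (T : M →ₗ[R] M) := by
  rw [mem_invtSubmodule, Submodule.span_le]
  rintro _ ⟨n, rfl⟩
  exact Submodule.subset_span ⟨n + 1, by simp only [pow_succ', mul_apply_eq_comp]; rfl⟩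

theorem compression_pow_apply {Q T : M →L[R] M} (hQ : IsIdempotentElem Q) {C : Submodule R M}
    (hC : C ∈ invtSubmodule (T : M →ₗ[R] M)) (hQT : ∀ y ∈ C, Q (T (Q y)) = Q (T y)) (n : ℕ)
    {y : M} (hy : y ∈ C) :
    ((Q * T * Q) ^ n) (Q y) = Q ((T ^ n) y) := by
  induction n generalizing y with
  | zero => rfl
  | succ n ih =>
    have hQQ : Q (Q y) = Q y := DFunLike.congr_fun hQ y
    simp only [pow_succ, mul_apply_eq_comp, hQQ, hQT y hy]
    exact ih (hC hy)

end Semiring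

variable {𝕜 E : Type*} [RCLike 𝕜] [NormedAddCommGroup E] [InnerProductSpace 𝕜 E]
  [CompleteSpace E]

theorem orthogonal_mem_invtSubmodule_adjoint {T : E →L[𝕜] E} {U : Submodule 𝕜 E}
    (h : U ∈ invtSubmodule (T : E →ₗ[𝕜] E)) :
    Uᗮ ∈ invtSubmodule (adjoint T : E →ₗ[𝕜] E) :=
  orthogonal_mem_invtSubmodule (by rwa [adjoint_adjoint])

theorem _root_.IsSelfAdjoint.adjoint_mul_mul_self {P : E →L[𝕜] E} (hP : IsSelfAdjoint P)
    (T : E →L[𝕜] E) : adjoint (P * T * P) = P * adjoint T * P := by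
  simp only [← star_eq_adjoint, star_mul, hP.star_eq, mul_assoc]

end ContinuousLinearMap

namespace Submodule

variable {𝕜 E : Type*} [RCLike 𝕜] [NormedAddCommGroup E] [InnerProductSpace 𝕜 E]

theorem le_orthogonal_inf_orthogonal (C N : Submodule 𝕜 E) : N ≤ (C ⊓ Nᗮ)ᗮ :=
  N.le_orthogonal_orthogonal.trans (orthogonal_le inf_le_right)

theorem inf_orthogonal_inf_orthogonal_of_le {C N : Submodule 𝕜 E} [N.HasOrthogonalProjection]
    (hNC : N ≤ C) : C ⊓ (C ⊓ Nᗮ)ᗮ = N :=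
  calc C ⊓ (C ⊓ Nᗮ)ᗮ = (N ⊔ C ⊓ Nᗮ) ⊓ (C ⊓ Nᗮ)ᗮ := by
        rw [inf_comm C Nᗮ, sup_orthogonal_inf_of_hasOrthogonalProjection hNC]
    _ = N := by
        rw [sup_inf_assoc_of_le _ (le_orthogonal_inf_orthogonal C N), inf_orthogonal_eq_bot,
          sup_bot_eq]

theorem sub_starProjection_inf_orthogonal_mem {C N : Submodule 𝕜 E} [N.HasOrthogonalProjection]
    [(C ⊓ Nᗮ).HasOrthogonalProjection] (hNC : N ≤ C) {y : E} (hy : y ∈ C) :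
    y - (C ⊓ Nᗮ).starProjection y ∈ N :=
  (inf_orthogonal_inf_orthogonal_of_le hNC).le
    ⟨C.sub_mem hy (starProjection_apply_mem (C ⊓ Nᗮ) y).1, sub_starProjection_mem_orthogonal y⟩

theorem starProjection_inf_orthogonal_compression_pow_apply {C N : Submodule 𝕜 E}
    [N.HasOrthogonalProjection] [(C ⊓ Nᗮ).HasOrthogonalProjection] (hNC : N ≤ C)
    {T : E →L[𝕜] E} (hC : C ∈ invtSubmodule (T : E →ₗ[𝕜] E))
    (hN : N ∈ invtSubmodule (T : E →ₗ[𝕜] E)) (n : ℕ) {y : E} (hy : y ∈ C) :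
    (((C ⊓ Nᗮ).starProjection * T * (C ⊓ Nᗮ).starProjection) ^ n)
        ((C ⊓ Nᗮ).starProjection y) = (C ⊓ Nᗮ).starProjection ((T ^ n) y) := by
  refine (C ⊓ Nᗮ).starProjection.compression_pow_apply (isIdempotentElem_starProjection _) hC
    (fun x hx => ?_) n hy
  rw [eq_comm, ← sub_eq_zero, ← map_sub, ← map_sub, starProjection_apply_eq_zero_iff]
  exact le_orthogonal_inf_orthogonal C N (hN (sub_starProjection_inf_orthogonal_mem hNC hx))

theorem inner_starProjection_inf_orthogonal {C N : Submodule 𝕜 E} [N.HasOrthogonalProjection]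
    [(C ⊓ Nᗮ).HasOrthogonalProjection] (hNC : N ≤ C) {x y : E} (hx : x ∈ Nᗮ) (hy : y ∈ C) :
    inner 𝕜 ((C ⊓ Nᗮ).starProjection x) ((C ⊓ Nᗮ).starProjection y) = inner 𝕜 x y := by
  rw [inner_starProjection_left_eq_right, starProjection_eq_self_iff.mpr
    (starProjection_apply_mem _ _), eq_comm, ← sub_eq_zero, ← inner_sub_right]
  exact inner_left_of_mem_orthogonal (sub_starProjection_inf_orthogonal_mem hNC hy) hx

theorem starProjection_inf_orthogonal_compression_adjoint_pow_apply [CompleteSpace E]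
    {C N : Submodule 𝕜 E} [C.HasOrthogonalProjection] [N.HasOrthogonalProjection]
    [(C ⊓ Nᗮ).HasOrthogonalProjection] (hNC : N ≤ C) {T : E →L[𝕜] E}
    (hC : C ∈ invtSubmodule (T : E →ₗ[𝕜] E)) (hN : N ∈ invtSubmodule (T : E →ₗ[𝕜] E)) (n : ℕ)
    {y : E} (hy : y ∈ Nᗮ) :
    (((C ⊓ Nᗮ).starProjection * T * (C ⊓ Nᗮ).starProjection).adjoint ^ n)
        ((C ⊓ Nᗮ).starProjection y) = (C ⊓ Nᗮ).starProjection ((T.adjoint ^ n) y) := by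
  have hM : C ⊓ Nᗮ = Nᗮ ⊓ Cᗮᗮ := by rw [C.orthogonal_orthogonal, inf_comm]
  have : (Nᗮ ⊓ Cᗮᗮ).HasOrthogonalProjection := hM ▸ inferInstance
  rw [(isSelfAdjoint_starProjection _).adjoint_mul_mul_self]
  simpa only [hM] using starProjection_inf_orthogonal_compression_pow_apply
    (orthogonal_le hNC) (T.orthogonal_mem_invtSubmodule_adjoint hN)
    (T.orthogonal_mem_invtSubmodule_adjoint hC) n hy

theorem topologicalClosure_map_starProjection [CompleteSpace E] {M K : Submodule 𝕜 E}
    [M.HasOrthogonalProjection] (h : M ⊓ Kᗮ = ⊥) :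
    (K.map (M.starProjection : E →ₗ[𝕜] E)).topologicalClosure = M := by
  set L := (K.map (M.starProjection : E →ₗ[𝕜] E)).topologicalClosure
  have hLM : L ≤ M := by
    refine topologicalClosure_minimal _ ?_ (M.orthogonal_orthogonal ▸ Mᗮ.isClosed_orthogonal)
    rintro _ ⟨x, -, rfl⟩
    exact starProjection_apply_mem M x
  have hL : Lᗮ ⊓ M = ⊥ := by
    refine eq_bot_iff.mpr fun w ⟨hwL, hwM⟩ => h.le ⟨hwM, fun k hk => ?_⟩
    rw [orthogonal_closure] at hwL
    rw [← starProjection_eq_self_iff.mpr hwM, ← inner_starProjection_left_eq_right]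
    exact hwL _ (mem_map_of_mem hk)
  calc L = L ⊔ Lᗮ ⊓ M := by rw [hL, sup_bot_eq]
    _ = M := sup_orthogonal_inf_of_hasOrthogonalProjection hLM

theorem topologicalClosure_span_range_starProjection [CompleteSpace E] {M : Submodule 𝕜 E}
    [M.HasOrthogonalProjection] {ι : Type*} (f : ι → E) (h : M ⊓ (span 𝕜 (Set.range f))ᗮ = ⊥) :
    (span 𝕜 (Set.range fun i => M.starProjection (f i))).topologicalClosure = M := by
  have hspan : span 𝕜 (Set.range fun i => M.starProjection (f i)) =
      (span 𝕜 (Set.range f)).map (M.starProjection : E →ₗ[𝕜] E) := by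
    rw [map_span, ← Set.range_comp]
    rfl
  rw [hspan]
  exact topologicalClosure_map_starProjection h

end Submodule

open ContinuousLinearMap Submodule

/-- One-variable Kalman decomposition: compressing a realization `(A,b,c)` to the
minimal subspace `M = C ⊖ (O^⊥ ∩ C)` (with `C` the controllable and `O` the observable
subspace, and `Q` the orthogonal projection onto `M`) yields a realization
`(QAQ, Qb, Qc)` of the same power series which is both controllable and observable. -/
theorem stmt14 {H : Type*} [NormedAddCommGroup H] [InnerProductSpace ℂ H] [CompleteSpace H]
    (A : H →L[ℂ] H) (b c : H)
    (Q : H →L[ℂ] H) (hQidem : IsIdempotentElem Q) (hQsa : IsSelfAdjoint Q)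
    (hQran : LinearMap.range (Q : H →ₗ[ℂ] H) =
      (Submodule.span ℂ (Set.range fun n : ℕ => (A ^ n) c)).topologicalClosure ⊓
        (((Submodule.span ℂ (Set.range fun n : ℕ =>
            ((ContinuousLinearMap.adjoint A) ^ n) b)).topologicalClosure)ᗮ ⊓
          (Submodule.span ℂ (Set.range fun n : ℕ => (A ^ n) c)).topologicalClosure)ᗮ) :
    (∀ n : ℕ, @inner ℂ H _ (Q b) (((Q * A * Q) ^ n) (Q c)) =
        @inner ℂ H _ b ((A ^ n) c)) ∧
      (Submodule.span ℂ
          (Set.range fun n : ℕ => ((Q * A * Q) ^ n) (Q c))).topologicalClosure =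
        LinearMap.range (Q : H →ₗ[ℂ] H) ∧
      (Submodule.span ℂ
          (Set.range fun n : ℕ =>
            ((ContinuousLinearMap.adjoint (Q * A * Q)) ^ n) (Q b))).topologicalClosure =
        LinearMap.range (Q : H →ₗ[ℂ] H) := by
  set S := span ℂ (Set.range fun n : ℕ => (A ^ n) c)
  set S' := span ℂ (Set.range fun n : ℕ => (adjoint A ^ n) b)
  set C := S.topologicalClosure
  set O := S'.topologicalClosure
  set N := Oᗮ ⊓ C
  set M := C ⊓ Nᗮ
  have : CompleteSpace N :=
    (O.isClosed_orthogonal.inter S.isClosed_topologicalClosure).completeSpace_coe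
  have : CompleteSpace M :=
    (S.isClosed_topologicalClosure.inter N.isClosed_orthogonal).completeSpace_coe
  obtain rfl : Q = M.starProjection :=
    (IsStarProjection.ext_iff ⟨hQidem, hQsa⟩ isStarProjection_starProjection).mpr
      (hQran.trans M.range_starProjection.symm)
  have hC : C ∈ invtSubmodule (A : H →ₗ[ℂ] H) :=
    topologicalClosure_mem_invtSubmodule (A.span_range_pow_apply_mem_invtSubmodule c)
  have hN : N ∈ invtSubmodule (A : H →ₗ[ℂ] H) := invtSubmodule.inf_mem
    (orthogonal_mem_invtSubmodule <| topologicalClosure_mem_invtSubmodule <|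
      (adjoint A).span_range_pow_apply_mem_invtSubmodule b) hC
  have hNC : N ≤ C := inf_le_right
  have hAc (n : ℕ) : (A ^ n) c ∈ C := S.le_topologicalClosure (subset_span ⟨n, rfl⟩)
  have hbO : b ∈ O := S'.le_topologicalClosure (subset_span ⟨0, rfl⟩)
  have hbN : b ∈ Nᗮ := O.le_orthogonal_orthogonal.trans (orthogonal_le inf_le_left) hbO
  have hcompress (n : ℕ) : ((M.starProjection * A * M.starProjection) ^ n) (M.starProjection c) =
      M.starProjection ((A ^ n) c) :=
    starProjection_inf_orthogonal_compression_pow_apply hNC hC hN n (hAc 0)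
  have hcompress' (n : ℕ) : (adjoint (M.starProjection * A * M.starProjection) ^ n)
      (M.starProjection b) = M.starProjection ((adjoint A ^ n) b) :=
    starProjection_inf_orthogonal_compression_adjoint_pow_apply hNC hC hN n hbN
  rw [hQran]
  refine ⟨fun n => ?_, ?_, ?_⟩
  · rw [hcompress, inner_starProjection_inf_orthogonal hNC hbN (hAc n)]
  · simp_rw [hcompress]
    refine topologicalClosure_span_range_starProjection _ (eq_bot_iff.mpr fun w ⟨hwM, hwS⟩ => ?_)
    exact C.inf_orthogonal_eq_bot.le ⟨hwM.1, by rwa [← orthogonal_closure] at hwS⟩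
  · simp_rw [hcompress']
    refine topologicalClosure_span_range_starProjection _ (eq_bot_iff.mpr fun w ⟨hwM, hwS⟩ => ?_)
    exact N.inf_orthogonal_eq_bot.le ⟨⟨by rwa [← orthogonal_closure] at hwS, hwM.1⟩, hwM.2⟩
end

section
/- With T(α)_k as above for a word α of length n, for every 1 ≤ m ≤ n one has ∑_{|ω| = m} T(α)^ω (T(α)^ω)* = ∑_{j=1}^{n-m+1} E_j, where the sum is over all words ω of length m in the alphabet {1,...,d}. In particular T(α)^ω = 0 for every word ω of length greater than n. -/
open Classical in
lemma prodEntry (d n : ℕ) (α : Fin n → Fin d)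
    (T : Fin d → Matrix (Fin (n + 1)) (Fin (n + 1)) ℂ)
    (hT : ∀ k p q, T k p q =
      if h : (p : ℕ) < n then
        (if α ⟨p, h⟩ = k ∧ (q : ℕ) = (p : ℕ) + 1 then 1 else 0)
      else 0) :
    ∀ (β : List (Fin d)) (p q : Fin (n + 1)),
      ((β.map T).prod) p q =
        if ((q : ℕ) = (p : ℕ) + β.length ∧ (p : ℕ) + β.length ≤ n ∧
            ∀ (i : ℕ) (hi : i < β.length) (hpn : (p : ℕ) + i < n),
              β.get ⟨i, hi⟩ = α ⟨(p : ℕ) + i, hpn⟩)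
        then 1 else 0 := by
  intro β
  induction β with
  | nil =>
    intro p q
    have hp : (p : ℕ) ≤ n := Nat.lt_succ_iff.mp p.isLt
    simp only [List.map_nil, List.prod_nil, Matrix.one_apply, List.length_nil, Nat.add_zero]
    by_cases h : p = q
    · subst h
      rw [if_pos rfl, if_pos ⟨rfl, hp, fun i hi => absurd hi (by omega)⟩]
    · rw [if_neg h, if_neg]
      rintro ⟨h1, -, -⟩
      exact h (Fin.val_injective h1.symm)
  | cons a β ih =>
    intro p q
    simp only [List.map_cons, List.prod_cons, Matrix.mul_apply, List.length_cons]
    by_cases hpn : (p : ℕ) < n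
    · set r0 : Fin (n + 1) := ⟨(p : ℕ) + 1, by omega⟩ with hr0
      have hsum : ∑ r, T a p r * ((β.map T).prod) r q = T a p r0 * ((β.map T).prod) r0 q := by
        refine Finset.sum_eq_single r0 (fun r _ hr => ?_) (by simp)
        have : T a p r = 0 := by
          rw [hT, dif_pos hpn, if_neg]
          rintro ⟨-, h2⟩
          exact hr (Fin.val_injective h2)
        rw [this, zero_mul]
      rw [hsum, hT, dif_pos hpn, ih r0 q]
      by_cases hC : (q : ℕ) = (p : ℕ) + (β.length + 1) ∧ (p : ℕ) + (β.length + 1) ≤ n ∧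
          ∀ (i : ℕ) (hi : i < β.length + 1) (hpn' : (p : ℕ) + i < n),
            (a :: β).get ⟨i, hi⟩ = α ⟨(p : ℕ) + i, hpn'⟩
      · rw [if_pos hC]
        obtain ⟨h1, h2, h3⟩ := hC
        have ha : α ⟨(p : ℕ), hpn⟩ = a := by
          have := h3 0 (by omega) (by omega)
          simpa using this.symm
        rw [if_pos ⟨ha, rfl⟩, if_pos, one_mul]
        refine ⟨by simpa [hr0] using by omega, by simp [hr0]; omega, ?_⟩
        intro i hi hpn'
        have h4 : (p : ℕ) + (i + 1) < n := by simp [hr0] at hpn'; omega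
        have h5 := h3 (i + 1) (by omega) h4
        rw [show (⟨((r0 : Fin (n+1)) : ℕ) + i, hpn'⟩ : Fin n) = ⟨(p : ℕ) + (i + 1), h4⟩ from
          Fin.mk_eq_mk.mpr (by simp [hr0]; omega)]
        exact h5
      · rw [if_neg hC]
        by_cases ha : α ⟨(p : ℕ), hpn⟩ = a ∧ (r0 : ℕ) = (p : ℕ) + 1
        · rw [if_pos ha, one_mul, if_neg]
          rintro ⟨h1, h2, h3⟩
          refine hC ⟨?_, ?_, ?_⟩
          · simp [hr0] at h1; omega
          · simp [hr0] at h2; omega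
          · intro i hi hpn'
            match i, hi with
            | 0, _ => simpa using ha.1.symm
            | (j + 1), hj =>
              have h4 : ((r0 : Fin (n+1)) : ℕ) + j < n := by simp [hr0]; omega
              have h5 := h3 j (by omega) h4
              rw [show (⟨(p : ℕ) + (j + 1), hpn'⟩ : Fin n) = ⟨((r0 : Fin (n+1)) : ℕ) + j, h4⟩ from
                Fin.mk_eq_mk.mpr (by simp [hr0]; omega)]
              exact h5
        · rw [if_neg ha, zero_mul]
    · have hz : ∀ r, T a p r = 0 := fun r => by rw [hT, dif_neg hpn]
      simp only [hz, zero_mul, Finset.sum_const_zero]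
      rw [eq_comm, if_neg]
      rintro ⟨-, h2, -⟩
      omega
/-- For a word `α` of length `n` and `1 ≤ m ≤ n`, one has
`∑_{|ω| = m} T(α)^ω (T(α)^ω)* = ∑_{j=1}^{n-m+1} E_j`; in particular `T(α)^ω = 0`
for every word `ω` of length greater than `n`. -/
theorem stmt16 (d n : ℕ) (α : Fin n → Fin d)
    (T : Fin d → Matrix (Fin (n + 1)) (Fin (n + 1)) ℂ)
    (hT : ∀ k p q, T k p q =
      if h : (p : ℕ) < n then
        (if α ⟨p, h⟩ = k ∧ (q : ℕ) = (p : ℕ) + 1 then 1 else 0)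
      else 0) :
    (∀ m : ℕ, 1 ≤ m → m ≤ n →
      (∑ ω : Fin m → Fin d,
          ((List.ofFn ω).map T).prod * star (((List.ofFn ω).map T).prod)) =
        Matrix.of fun p q : Fin (n + 1) =>
          if p = q ∧ (p : ℕ) + m ≤ n then (1 : ℂ) else 0) ∧
      ∀ β : List (Fin d), n < β.length → (β.map T).prod = 0 := by
  constructor
  · intro m hm1 hmn
    ext p q
    simp only [Matrix.sum_apply, Matrix.mul_apply, Matrix.star_apply, Matrix.of_apply]
    simp only [prodEntry d n α T hT, List.length_ofFn, List.get_ofFn, Fin.cast_mk,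
      apply_ite (star : ℂ → ℂ), star_one, star_zero, ite_mul, mul_ite, mul_one, mul_zero,
      one_mul, zero_mul]
    by_cases hpq : p = q ∧ (p : ℕ) + m ≤ n
    · obtain ⟨rfl, hle⟩ := hpq
      rw [if_pos ⟨rfl, hle⟩]
      have hω0 : ∀ i : Fin m, ((p : ℕ) + (i : ℕ)) < n := fun i => by omega
      set ω0 : Fin m → Fin d := fun i => α ⟨(p : ℕ) + (i : ℕ), hω0 i⟩ with hw
      rw [Finset.sum_eq_single ω0]
      · set r0 : Fin (n + 1) := ⟨(p : ℕ) + m, by omega⟩ with hr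
        rw [Finset.sum_eq_single r0]
        · rw [if_pos, if_pos]
          · exact ⟨rfl, hle, fun i hi hpn => rfl⟩
          · exact ⟨rfl, hle, fun i hi hpn => rfl⟩
        · intro r _ hrne
          rw [if_neg]
          rintro ⟨h1, -, -⟩
          exact hrne (Fin.val_injective (by simp [hr]; omega))
        · simp
      · intro ω _ hω
        apply Finset.sum_eq_zero
        intro r _
        rw [if_neg]
        rintro ⟨-, -, h3⟩
        apply hω
        funext i
        exact h3 i.1 i.2 (hω0 i)
      · simp
    · rw [if_neg hpq]
      apply Finset.sum_eq_zero
      intro ω _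
      apply Finset.sum_eq_zero
      intro r _
      split_ifs with h1 h2
      · obtain ⟨ha1, ha2, -⟩ := h1
        obtain ⟨hb1, hb2, -⟩ := h2
        exact absurd ⟨Fin.val_injective (by omega), by omega⟩ hpq
      · rfl
      · rfl
  · intro β hβ
    ext p q
    rw [prodEntry d n α T hT, Matrix.zero_apply, if_neg]
    rintro ⟨-, h2, -⟩
    omega
end

section
/- Let (A,B,C,D) be a one-variable Fornasini–Marchesini realization with D ≠ 0 and transfer function g(z) = D + z·C((1 - zA)⁻¹ B), and define A⁻ := A - D⁻¹·(B·C), B⁻ := -D⁻¹·B, C⁻ := D⁻¹·C, D⁻ := D⁻¹. Then for every z such that both 1 - zA and 1 - zA⁻ are invertible and g(z) ≠ 0, the transfer function of (A⁻, B⁻, C⁻, D⁻) at z equals g(z)⁻¹. -/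
/-- Inversion step of the Fornasini–Marchesini algorithm (one variable): with
`A⁻ = A - D⁻¹ (B·C)`, `B⁻ = -D⁻¹ B`, `C⁻ = D⁻¹ C`, `D⁻ = D⁻¹`, for every `z` such
that both pencils are invertible and `g(z) ≠ 0`, the transfer function of
`(A⁻, B⁻, C⁻, D⁻)` at `z` equals `g(z)⁻¹`. -/
theorem stmt19 {H : Type*} [NormedAddCommGroup H] [NormedSpace ℂ H] [CompleteSpace H]
    (A : H →L[ℂ] H) (B : H) (C : H →L[ℂ] ℂ) (D : ℂ) (hD : D ≠ 0)
    (T : H →L[ℂ] H) (hT : ∀ x : H, T x = A x - D⁻¹ • (C x • B))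
    (z : ℂ)
    (hz : IsUnit ((1 : H →L[ℂ] H) - z • A))
    (hzT : IsUnit ((1 : H →L[ℂ] H) - z • T))
    (hg : D + z * C (Ring.inverse ((1 : H →L[ℂ] H) - z • A) B) ≠ 0) :
    D⁻¹ + z * (D⁻¹ * C (Ring.inverse ((1 : H →L[ℂ] H) - z • T) ((-D⁻¹) • B))) =
      (D + z * C (Ring.inverse ((1 : H →L[ℂ] H) - z • A) B))⁻¹ := by
  set M : H →L[ℂ] H := (1 : H →L[ℂ] H) - z • A with hM
  set N : H →L[ℂ] H := (1 : H →L[ℂ] H) - z • T with hN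
  set u : H := Ring.inverse N ((-D⁻¹) • B) with hu
  set v : H := Ring.inverse M B with hv
  have hNu : N u = (-D⁻¹) • B := by
    have h := DFunLike.congr_fun (Ring.mul_inverse_cancel N hzT) ((-D⁻¹) • B)
    simp only [ContinuousLinearMap.mul_apply, ContinuousLinearMap.one_apply] at h
    exact h
  have h3 : Ring.inverse M (M u) = u := by
    have h := DFunLike.congr_fun (Ring.inverse_mul_cancel M hz) u
    simp only [ContinuousLinearMap.mul_apply, ContinuousLinearMap.one_apply] at h
    exact h
  have hMu : M u = (-D⁻¹ * (1 + z * C u)) • B := by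
    have h1 : u - z • T u = (-D⁻¹) • B := by
      simpa [hN, ContinuousLinearMap.sub_apply, ContinuousLinearMap.smul_apply] using hNu
    rw [hT u] at h1
    have h2 : u - z • A u = (-D⁻¹ * (1 + z * C u)) • B := by
      linear_combination (norm := module) h1
    simpa [hM, ContinuousLinearMap.sub_apply, ContinuousLinearMap.smul_apply] using h2
  have huv : u = (-D⁻¹ * (1 + z * C u)) • v := by
    conv_lhs => rw [← h3, hMu]
    rw [map_smul]
  have hα : C u = (-D⁻¹ * (1 + z * C u)) * C v := by
    conv_lhs => rw [huv]
    simp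
  set α := C u
  set β := C v
  refine eq_inv_of_mul_eq_one_left ?_
  field_simp at hα ⊢
  linear_combination z * hα
end
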